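/- Let ρ be a density operator on a finite-dimensional complex Hilbert space and X a positive semidefinite operator with X ≤ id and 1 − tr(ρX) ≤ λ ≤ 1. Then the trace norm distance satisfies ‖ρ − √X ρ √X‖₁ ≤ √(8λ). -/

import Mathlib

open scoped BigOperators
open Matrix Filter Topology
open scoped ComplexOrder

namespace Matrix.PosSemidef

/-- The positive square root, as `Matrix.PosSemidef.sqrt` was defined in Mathlib (Dec 2024). -/
noncomputable def sqrt {n 𝕜 : Type*} [Fintype n] [DecidableEq n] [RCLike 𝕜]
    {A : Matrix n n 𝕜} (hA : A.PosSemidef) : Matrix n n 𝕜 :=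
  hA.1.eigenvectorUnitary.1 * diagonal ((↑) ∘ (√·) ∘ hA.1.eigenvalues) *
  (star hA.1.eigenvectorUnitary : Matrix n n 𝕜)

end Matrix.PosSemidef

/-- Trace norm (sum of singular values) of a complex matrix. -/
noncomputable def traceNorm {ι : Type*} [Fintype ι] [DecidableEq ι]
    (A : Matrix ι ι ℂ) : ℝ :=
  ((Matrix.posSemidef_conjTranspose_mul_self A).sqrt.trace).re

/-- A density operator: positive semidefinite with unit trace. -/
def IsDensity {ι : Type*} [Fintype ι] (ρ : Matrix ι ι ℂ) : Prop :=
  ρ.PosSemidef ∧ ρ.trace = 1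

/-- Von Neumann entropy `S(ρ) = -tr(ρ log ρ)` (base-2 logarithm), via eigenvalues. -/
noncomputable def vnEntropy {ι : Type*} [Fintype ι] [DecidableEq ι]
    (ρ : Matrix ι ι ℂ) : ℝ :=
  if h : ρ.IsHermitian then -∑ i, h.eigenvalues i * Real.logb 2 (h.eigenvalues i) else 0

/-- Holevo quantity `χ(P, {ρ_x})`. -/
noncomputable def holevo {X ι : Type*} [Fintype X] [Fintype ι] [DecidableEq ι]
    (P : X → ℝ) (ρ : X → Matrix ι ι ℂ) : ℝ :=
  vnEntropy (∑ x, (P x : ℂ) • ρ x) - ∑ x, P x * vnEntropy (ρ x)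

/-- The set of probability distributions on a finite type. -/
def FinDist (α : Type*) [Fintype α] : Type _ :=
  {p : α → ℝ // (∀ a, 0 ≤ p a) ∧ ∑ a, p a = 1}

/-- Tensor-product state corresponding to a codeword and a state sequence. -/
noncomputable def prodState {d n : ℕ} {X Θ' : Type*}
    (ρ : X → Θ' → Matrix (Fin d) (Fin d) ℂ) (c : Fin n → X) (t : Fin n → Θ') :
    Matrix (Fin n → Fin d) (Fin n → Fin d) ℂ :=
  fun a b => ∏ i, ρ (c i) (t i) (a i) (b i)

/-- A POVM: positive semidefinite operators summing to the identity. -/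
def IsPOVM {ι κ : Type*} [Fintype ι] [DecidableEq ι] [Fintype κ]
    (D : κ → Matrix ι ι ℂ) : Prop :=
  (∀ j, (D j).PosSemidef) ∧ ∑ j, D j = 1

/-- Average decoding error of a code under state sequence `t`. -/
noncomputable def avgError {d n : ℕ} {X Θ' : Type*} {J : ℕ}
    (ρ : X → Θ' → Matrix (Fin d) (Fin d) ℂ)
    (c : Fin J → Fin n → X)
    (D : Fin J → Matrix (Fin n → Fin d) (Fin n → Fin d) ℂ)
    (t : Fin n → Θ') : ℝ :=
  1 - (1 / (J : ℝ)) * ∑ j, ((prodState ρ (c j) t * D j).trace).re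

/-- Holevo quantity of an ensemble with uniform distribution. -/
noncomputable def uniformHolevo {ι : Type*} [Fintype ι] [DecidableEq ι] {J : ℕ}
    (τ : Fin J → Matrix ι ι ℂ) : ℝ :=
  vnEntropy ((J : ℂ)⁻¹ • ∑ j, τ j) - (1 / (J : ℝ)) * ∑ j, vnEntropy (τ j)

/-- Symmetrizability of a classical-quantum arbitrarily varying channel. -/
def Symmetrizable {d : ℕ} {X Θ' : Type*} [Fintype X] [Fintype Θ']
    (ρ : X → Θ' → Matrix (Fin d) (Fin d) ℂ) : Prop :=
  ∃ U : X → Θ' → ℝ, (∀ x, (∀ t, 0 ≤ U x t) ∧ ∑ t, U x t = 1) ∧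
    ∀ x x', ∑ t, (U x t : ℂ) • ρ x' t = ∑ t, (U x' t : ℂ) • ρ x t

/-- `R` is an achievable secrecy rate for the cq arbitrarily varying wiretap channel (no CSI). -/
def AchievableSecrecyRate {d : ℕ} {X Θ' : Type*} [Fintype X] [Fintype Θ']
    (ρ σ : X → Θ' → Matrix (Fin d) (Fin d) ℂ) (R : ℝ) : Prop :=
  ∀ ε > (0:ℝ), ∀ δ > (0:ℝ), ∀ ζ > (0:ℝ), ∃ N : ℕ, ∀ n ≥ N,
    ∃ J : ℕ, 0 < J ∧ ∃ c : Fin J → Fin n → X,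
      ∃ D : Fin J → Matrix (Fin n → Fin d) (Fin n → Fin d) ℂ, IsPOVM D ∧
        Real.logb 2 J / n > R - δ ∧
        (∀ t : Fin n → Θ', avgError ρ c D t < ε) ∧
        (∀ t : Fin n → Θ',
          (1 / (n : ℝ)) * uniformHolevo (fun j => prodState σ (c j) t) < ζ)

/-- `R` is an achievable secrecy rate with CSI at the transmitter. -/
def AchievableSecrecyRateCSI {d : ℕ} {X Θ' : Type*} [Fintype X] [Fintype Θ']
    (ρ σ : X → Θ' → Matrix (Fin d) (Fin d) ℂ) (R : ℝ) : Prop :=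
  ∀ ε > (0:ℝ), ∀ δ > (0:ℝ), ∀ ζ > (0:ℝ), ∃ N : ℕ, ∀ n ≥ N,
    ∃ J : ℕ, 0 < J ∧ ∃ c : (Fin n → Θ') → Fin J → Fin n → X,
      ∃ D : Fin J → Matrix (Fin n → Fin d) (Fin n → Fin d) ℂ, IsPOVM D ∧
        Real.logb 2 J / n > R - δ ∧
        (∀ t : Fin n → Θ', avgError ρ (c t) D t < ε) ∧
        (∀ t : Fin n → Θ',
          (1 / (n : ℝ)) * uniformHolevo (fun j => prodState σ (c t j) t) < ζ)

/-- Secrecy capacity (no CSI). -/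
noncomputable def secrecyCapacity {d : ℕ} {X Θ' : Type*} [Fintype X] [Fintype Θ']
    (ρ σ : X → Θ' → Matrix (Fin d) (Fin d) ℂ) : ℝ :=
  sSup {R : ℝ | 0 ≤ R ∧ AchievableSecrecyRate ρ σ R}

/-- Secrecy capacity with CSI at the transmitter. -/
noncomputable def secrecyCapacityCSI {d : ℕ} {X Θ' : Type*} [Fintype X] [Fintype Θ']
    (ρ σ : X → Θ' → Matrix (Fin d) (Fin d) ℂ) : ℝ :=
  sSup {R : ℝ | 0 ≤ R ∧ AchievableSecrecyRateCSI ρ σ R}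

/-- An orthogonal projection. -/
def IsProj {ι : Type*} [Fintype ι] (Q : Matrix ι ι ℂ) : Prop :=
  Qᴴ = Q ∧ Q * Q = Q

/-- Spectral projector of a Hermitian matrix onto the eigenvalues lying in `[lo, hi]`. -/
noncomputable def specProj {ι : Type*} [Fintype ι] [DecidableEq ι] {ρ : Matrix ι ι ℂ}
    (h : ρ.IsHermitian) (lo hi : ℝ) : Matrix ι ι ℂ :=
  (h.eigenvectorUnitary : Matrix ι ι ℂ) *
    Matrix.diagonal
      (fun k => if lo ≤ h.eigenvalues k ∧ h.eigenvalues k ≤ hi then (1 : ℂ) else 0) *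
    (h.eigenvectorUnitary : Matrix ι ι ℂ)ᴴ

/-- Tensor product of a family of `d × d` matrices. -/
noncomputable def tensorFam {d n : ℕ} (M : Fin n → Matrix (Fin d) (Fin d) ℂ) :
    Matrix (Fin n → Fin d) (Fin n → Fin d) ℂ :=
  Matrix.of fun a b => ∏ i, M i (a i) (b i)

open Classical in
noncomputable def invSqrt {ι : Type*} [Fintype ι] [DecidableEq ι]
    (M : Matrix ι ι ℂ) : Matrix ι ι ℂ :=
  if h : M.PosSemidef then (h.sqrt)⁻¹ else 0

/-! With `S = √X` and `Q = 1 - S` one has `ρ - SρS = Qρ + SρQ`. The trace norm of the Hermitian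
matrix `Δ = ρ - SρS` is `re tr(UΔ)` for `U = sign Δ`, a Hermitian contraction, and the two
resulting terms `tr(UQρ)`, `tr(USρQ)` are each at most `√tr(ρQ²) ≤ √λ` by the Cauchy–Schwarz
inequality for the form `(A, B) ↦ tr(ρ Bᴴ A)`, because `Q² = (1 - √X)² ≤ 1 - X` when
`0 ≤ X ≤ 1`. Hence `‖Δ‖₁ ≤ 2√λ ≤ √(8λ)`. -/

open scoped MatrixOrder

section
variable {A : Type*} [Ring A] [StarRing A] [PartialOrder A] [StarOrderedRing A]
  [TopologicalSpace A] [Algebra ℝ A] [ContinuousFunctionalCalculus ℝ A IsSelfAdjoint]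
  [NonnegSpectrumClass ℝ A]

theorem one_sub_cfc_sqrt_mul_self_le {a : A} (ha₀ : 0 ≤ a) (ha₁ : a ≤ 1) :
    (1 - cfc Real.sqrt a) * (1 - cfc Real.sqrt a) ≤ 1 - a := by
  have hsqrt : 1 - cfc Real.sqrt a = cfc (fun x => 1 - √x) a := by
    rw [cfc_sub (fun _ => 1) Real.sqrt a, cfc_const_one ℝ a]
  have hid : 1 - a = cfc (fun x : ℝ => 1 - x) a := by
    rw [cfc_sub (fun _ : ℝ => 1) (fun x : ℝ => x) a, cfc_const_one ℝ a, cfc_id' ℝ a]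
  rw [hsqrt, ← cfc_mul .., hid]
  refine cfc_mono fun x hx => ?_
  have hx₀ : 0 ≤ x := spectrum_nonneg_of_nonneg ha₀ hx
  have hx₁ : x ≤ 1 := (CFC.le_one_iff a).mp ha₁ x hx
  have hsq : √x * √x = x := Real.mul_self_sqrt hx₀
  nlinarith [Real.sqrt_le_one.mpr hx₁, Real.sqrt_nonneg x]

end

theorem star_mul_mul_self_le_of_star_mul_self_le_one {R : Type*} [Semiring R] [StarRing R]
    [PartialOrder R] [StarOrderedRing R] {u : R} (hu : star u * u ≤ 1) (s : R) :
    star (u * s) * (u * s) ≤ star s * s := calc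
  star (u * s) * (u * s) = star s * (star u * u) * s := by simp only [star_mul, mul_assoc]
  _ ≤ star s * 1 * s := star_left_conjugate_le_conjugate hu s
  _ = star s * s := by rw [mul_one]

namespace Matrix.PosSemidef

variable {n 𝕜 : Type*} [Fintype n] [RCLike 𝕜]

theorem re_trace_mul_conjTranspose_mul_le {ρ : Matrix n n 𝕜} (hρ : ρ.PosSemidef)
    (A B : Matrix n n 𝕜) :
    RCLike.re (ρ * (Bᴴ * A)).trace ≤
      √(RCLike.re (ρ * (Bᴴ * B)).trace) * √(RCLike.re (ρ * (Aᴴ * A)).trace) := by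
  let := ρ.toMatrixSeminormedAddCommGroup hρ
  let := ρ.toMatrixInnerProductSpace hρ
  have hinner : ∀ x y : Matrix n n 𝕜, inner 𝕜 x y = (ρ * (xᴴ * y)).trace := fun x y => by
    show (y * ρ * xᴴ).trace = _
    rw [trace_mul_cycle, trace_mul_cycle, mul_assoc]
  have hnorm : ∀ x : Matrix n n 𝕜, √(RCLike.re (ρ * (xᴴ * x)).trace) = ‖x‖ := fun x => by
    rw [← hinner, norm_eq_sqrt_re_inner (𝕜 := 𝕜)]
  rw [hnorm, hnorm, ← hinner]
  exact (RCLike.re_le_norm _).trans (norm_inner_le_norm _ _)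

variable [DecidableEq n]

theorem sqrt_eq_cfc {A : Matrix n n 𝕜} (hA : A.PosSemidef) :
    hA.sqrt = cfc Real.sqrt A :=
  (hA.1.cfc_eq _).symm

theorem sqrt_mul_self {A : Matrix n n 𝕜} (hA : A.PosSemidef) :
    hA.sqrt * hA.sqrt = A := by
  rw [hA.sqrt_eq_cfc, ← cfc_mul ..]
  conv_rhs => rw [← cfc_id' ℝ A]
  exact cfc_congr fun x hx => Real.mul_self_sqrt (spectrum_nonneg_of_nonneg hA.nonneg hx)

theorem trace_mul_nonneg {ρ P : Matrix n n 𝕜} (hρ : ρ.PosSemidef) (hP : P.PosSemidef) :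
    0 ≤ (ρ * P).trace := by
  obtain ⟨T, rfl⟩ := CStarAlgebra.nonneg_iff_eq_star_mul_self.mp hP.nonneg
  rw [← mul_assoc, trace_mul_cycle, star_eq_conjTranspose]
  exact (hρ.mul_mul_conjTranspose_same T).trace_nonneg

theorem trace_mul_mono {ρ A B : Matrix n n 𝕜} (hρ : ρ.PosSemidef) (hAB : A ≤ B) :
    (ρ * A).trace ≤ (ρ * B).trace := by
  rw [← sub_nonneg, ← trace_sub, ← mul_sub]
  exact hρ.trace_mul_nonneg hAB

end Matrix.PosSemidef

namespace IsDensity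

variable {ι : Type*} [Fintype ι] [DecidableEq ι] {ρ : Matrix ι ι ℂ}

theorem re_trace_mul_one_sub (hρ : IsDensity ρ) (A : Matrix ι ι ℂ) :
    (ρ * (1 - A)).trace.re = 1 - (ρ * A).trace.re := by
  rw [mul_sub, mul_one, trace_sub, hρ.2, Complex.sub_re, Complex.one_re]

theorem re_trace_mul_le_one (hρ : IsDensity ρ) {A : Matrix ι ι ℂ} (hA : A ≤ 1) :
    (ρ * A).trace.re ≤ 1 := by
  simpa [hρ.2] using Complex.re_le_re (hρ.1.trace_mul_mono hA)

end IsDensity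

namespace Matrix.IsHermitian

variable {ι : Type*} [Fintype ι] [DecidableEq ι] {A : Matrix ι ι ℂ}

theorem traceNorm_eq_re_trace_cfc_abs (hA : A.IsHermitian) :
    traceNorm A = (cfc (fun x : ℝ => |x|) A).trace.re := by
  rw [traceNorm, PosSemidef.sqrt_eq_cfc, hA.eq, ← sq, ← cfc_comp_pow Real.sqrt 2 A]
  simp only [Real.sqrt_sq_eq_abs]

theorem exists_traceNorm_eq_re_trace_mul (hA : A.IsHermitian) :
    ∃ U : Matrix ι ι ℂ, U.IsHermitian ∧ U * U ≤ 1 ∧ traceNorm A = (U * A).trace.re := by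
  have hsign : ContinuousOn (fun x : ℝ => (SignType.sign x : ℝ)) (spectrum ℝ A) :=
    A.finite_real_spectrum.continuousOn _
  refine ⟨cfc (fun x : ℝ => (SignType.sign x : ℝ)) A, cfc_predicate _ _, ?_, ?_⟩
  · rw [← cfc_mul _ _ A hsign hsign]
    refine cfc_le_one _ _ fun x _ => ?_
    rcases lt_trichotomy x 0 with hx | rfl | hx <;> simp [*]
  · have habs :
        cfc (fun x : ℝ => |x|) A = cfc (fun x : ℝ => (SignType.sign x : ℝ)) A * A := by
      simp only [← sign_mul_self]
      rw [cfc_mul _ _ A hsign, cfc_id' ℝ A]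
    rw [hA.traceNorm_eq_re_trace_cfc_abs, habs]

end Matrix.IsHermitian

theorem IsDensity.traceNorm_sub_conj_le {ι : Type*} [Fintype ι] [DecidableEq ι]
    {ρ S : Matrix ι ι ℂ} (hρ : IsDensity ρ) (hS : S.IsHermitian) (hSS : S * S ≤ 1) :
    traceNorm (ρ - S * ρ * S) ≤ 2 * √(ρ * ((1 - S) * (1 - S))).trace.re := by
  set Q := 1 - S with hQ_def
  have hQ : Q.IsHermitian := isHermitian_one.sub hS
  have hΔ : (ρ - S * ρ * S).IsHermitian :=
    hρ.1.1.sub (by simpa only [hS.eq] using (hρ.1.conjTranspose_mul_mul_same S).1)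
  obtain ⟨U, hU, hUU, htn⟩ := hΔ.exists_traceNorm_eq_re_trace_mul
  have hUU' : Uᴴ * U ≤ 1 := by rwa [hU.eq]
  have hexpU : (ρ * (Uᴴ * U)).trace.re ≤ 1 := hρ.re_trace_mul_le_one hUU'
  have hexpUS : (ρ * ((U * S)ᴴ * (U * S))).trace.re ≤ 1 := hρ.re_trace_mul_le_one <|
    (star_mul_mul_self_le_of_star_mul_self_le_one hUU' S).trans
      (by rwa [star_eq_conjTranspose, hS.eq])
  have hsplit : (U * (ρ - S * ρ * S)).trace =
      (ρ * (Uᴴ * Q)).trace + (ρ * (Qᴴ * (U * S))).trace := by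
    have h : U * (ρ - S * ρ * S) = U * Q * ρ + U * S * (ρ * Q) := by rw [hQ_def]; noncomm_ring
    rw [h, trace_add, trace_mul_comm, trace_mul_comm (U * S), hU.eq, hQ.eq, mul_assoc ρ]
  calc traceNorm (ρ - S * ρ * S)
      = RCLike.re (ρ * (Uᴴ * Q)).trace + RCLike.re (ρ * (Qᴴ * (U * S))).trace := by
        rw [htn, hsplit, Complex.add_re]; rfl
    _ ≤ 1 * √(ρ * (Qᴴ * Q)).trace.re + √(ρ * (Qᴴ * Q)).trace.re * 1 := by
        gcongr
        · exact (hρ.1.re_trace_mul_conjTranspose_mul_le _ _).trans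
            (mul_le_mul_of_nonneg_right (Real.sqrt_le_one.mpr hexpU) (Real.sqrt_nonneg _))
        · exact (hρ.1.re_trace_mul_conjTranspose_mul_le _ _).trans
            (mul_le_mul_of_nonneg_left (Real.sqrt_le_one.mpr hexpUS) (Real.sqrt_nonneg _))
    _ = 2 * √(ρ * (Q * Q)).trace.re := by rw [hQ.eq]; ring

theorem gentle_measurement_general {d : ℕ} (ρ X : Matrix (Fin d) (Fin d) ℂ)
    (hρ : IsDensity ρ) (hX : X.PosSemidef) (hXle : (1 - X).PosSemidef)
    (lam : ℝ) (hlam₁ : 1 - ((ρ * X).trace).re ≤ lam) :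
    traceNorm (ρ - hX.sqrt * ρ * hX.sqrt) ≤ Real.sqrt (8 * lam) := by
  have hX₁ : X ≤ 1 := le_iff.mpr hXle
  have hS : hX.sqrt.IsHermitian := by rw [hX.sqrt_eq_cfc]; exact cfc_predicate _ _
  have hSS : hX.sqrt * hX.sqrt ≤ 1 := by rwa [hX.sqrt_mul_self]
  have hQQ : (1 - hX.sqrt) * (1 - hX.sqrt) ≤ 1 - X := by
    rw [hX.sqrt_eq_cfc]
    exact one_sub_cfc_sqrt_mul_self_le hX.nonneg hX₁
  have hexpQ : (ρ * ((1 - hX.sqrt) * (1 - hX.sqrt))).trace.re ≤ lam := by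
    linarith [Complex.re_le_re (hρ.1.trace_mul_mono hQQ), hρ.re_trace_mul_one_sub X]
  calc traceNorm (ρ - hX.sqrt * ρ * hX.sqrt)
      ≤ 2 * √(ρ * ((1 - hX.sqrt) * (1 - hX.sqrt))).trace.re :=
        hρ.traceNorm_sub_conj_le hS hSS
    _ ≤ √8 * √lam :=
        mul_le_mul (Real.le_sqrt_of_sq_le (by norm_num)) (Real.sqrt_le_sqrt hexpQ)
          (Real.sqrt_nonneg _) (Real.sqrt_nonneg _)
    _ = √(8 * lam) := (Real.sqrt_mul (by norm_num) lam).symm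

/-- **Gentle measurement lemma.** If `ρ` is a density operator, `0 ≤ X ≤ id` and
`1 - tr(ρX) ≤ λ ≤ 1`, then `‖ρ - √X ρ √X‖₁ ≤ √(8λ)`. -/
theorem gentle_measurement {d : ℕ} (ρ X : Matrix (Fin d) (Fin d) ℂ)
    (hρ : IsDensity ρ) (hX : X.PosSemidef) (hXle : (1 - X).PosSemidef)
    (lam : ℝ) (hlam₁ : 1 - ((ρ * X).trace).re ≤ lam) (hlam₂ : lam ≤ 1) :
    traceNorm (ρ - hX.sqrt * ρ * hX.sqrt) ≤ Real.sqrt (8 * lam) :=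
  gentle_measurement_general ρ X hρ hX hXle lam hlam₁
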